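/- Let K = (T, A)_ω be an ALCHIO weighted knowledge base, k an integer, and q a Boolean conjunctive query. If there exists an interpretation I with ω(I) ≤ k and I ⊨ q, then there exists an interpretation J with ω(J) ≤ k, J ⊨ q, and |Δ^J| ≤ |A| + |T| + 2^{2|T|²}; in particular the bound on |Δ^J| is polynomial in |A| (with |T| and |q| treated as constants) and independent of k. -/

import Mathlib

namespace DL

/-! ### Syntax -/

abbrev IndName := ℕ
abbrev CName := ℕ
abbrev RName := ℕ

/-- Roles: role names and inverse roles. -/
inductive Role where
  | name : RName → Role
  | inv  : RName → Role
deriving DecidableEq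

/-- `ALCHIO` concepts. -/
inductive Concept where
  | top  : Concept
  | bot  : Concept
  | atom : CName → Concept
  | nom  : IndName → Concept
  | neg  : Concept → Concept
  | conj : Concept → Concept → Concept
  | ex   : Role → Concept → Concept
deriving DecidableEq

/-- TBox axioms: concept inclusions and role inclusions. -/
inductive Axiom where
  | ci : Concept → Concept → Axiom
  | ri : Role → Role → Axiom
deriving DecidableEq

/-- ABox assertions. -/
inductive Assertion where
  | ca : CName → IndName → Assertion
  | ra : RName → IndName → IndName → Assertion
deriving DecidableEq

/-! ### Interpretations -/

/-- A DL interpretation with domain a subset of a universe `U`.  Individual names are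
interpreted via `indI` (under the standard names assumption, the individual names of the
ABox under consideration are interpreted "as themselves", i.e. injectively). -/
structure Interp (U : Type) where
  dom : Set U
  indI : IndName → U
  cI : CName → Set U
  rI : RName → Set (U × U)
  cI_sub : ∀ A, cI A ⊆ dom
  rI_sub : ∀ r p, p ∈ rI r → p.1 ∈ dom ∧ p.2 ∈ dom

variable {U : Type}

/-- Every individual name denotes an element of the domain. -/
def Interp.Proper (I : Interp U) : Prop := ∀ a, I.indI a ∈ I.dom

def Role.interp (I : Interp U) : Role → Set (U × U)
  | Role.name r => I.rI r
  | Role.inv r  => {p | (p.2, p.1) ∈ I.rI r}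

def Concept.interp (I : Interp U) : Concept → Set U
  | Concept.top => I.dom
  | Concept.bot => ∅
  | Concept.atom A => I.cI A
  | Concept.nom a => {I.indI a} ∩ I.dom
  | Concept.neg C => I.dom \ Concept.interp I C
  | Concept.conj C D => Concept.interp I C ∩ Concept.interp I D
  | Concept.ex r C => {d | ∃ e, (d, e) ∈ Role.interp I r ∧ e ∈ Concept.interp I C}

def Assertion.sat (I : Interp U) : Assertion → Prop
  | Assertion.ca A a => I.indI a ∈ I.cI A
  | Assertion.ra r a b => (I.indI a, I.indI b) ∈ I.rI r

/-! ### Violations and cost -/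

/-- Violations of a concept inclusion `C ⊑ D`. -/
def vioCI (I : Interp U) (C D : Concept) : Set U :=
  Concept.interp I C \ Concept.interp I D

/-- Violations of a role inclusion `r ⊑ s`. -/
def vioRI (I : Interp U) (r s : Role) : Set (U × U) :=
  Role.interp I r \ Role.interp I s

/-- The number of violations of an axiom. -/
noncomputable def Axiom.vioCount (I : Interp U) : Axiom → ℕ∞
  | Axiom.ci C D => (vioCI I C D).encard
  | Axiom.ri r s => (vioRI I r s).encard

open Classical in
/-- The cost of an interpretation w.r.t. a weighted knowledge base `(T, A)` with weight
functions `wT` (on TBox axioms) and `wA` (on ABox assertions). -/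
noncomputable def cost (T : Finset Axiom) (A : Finset Assertion)
    (wT : Axiom → ℕ∞) (wA : Assertion → ℕ∞) (I : Interp U) : ℕ∞ :=
  (∑ τ ∈ T, wT τ * Axiom.vioCount I τ) +
    ∑ α ∈ A, (if Assertion.sat I α then 0 else wA α)

/-! ### Queries -/

inductive Term where
  | var : ℕ → Term
  | ind : IndName → Term
deriving DecidableEq

inductive QAtom where
  | ca : CName → Term → QAtom
  | ra : RName → Term → Term → QAtom
deriving DecidableEq

/-- A Boolean conjunctive query: a finite set of atoms, all of whose variables are
(implicitly) existentially quantified. -/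
abbrev BCQ := Finset QAtom

def Term.eval (I : Interp U) (π : ℕ → U) : Term → U
  | Term.var v => π v
  | Term.ind a => I.indI a

def QAtom.sat (I : Interp U) (π : ℕ → U) : QAtom → Prop
  | QAtom.ca A t => Term.eval I π t ∈ I.cI A
  | QAtom.ra r t t' => (Term.eval I π t, Term.eval I π t') ∈ I.rI r

/-- Satisfaction of a BCQ in an interpretation. -/
def satQ (I : Interp U) (q : BCQ) : Prop :=
  ∃ π : ℕ → U, (∀ v, π v ∈ I.dom) ∧ ∀ a ∈ q, QAtom.sat I π a

/-- An instance query is a BCQ with a single atom. -/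
def IsIQ (q : BCQ) : Prop := ∃ a : QAtom, q = {a}

/-! ### Cost-based semantics -/

/-- `k`-satisfiability: some interpretation has cost at most `k`. -/
def ksat (T : Finset Axiom) (A : Finset Assertion)
    (wT : Axiom → ℕ∞) (wA : Assertion → ℕ∞) (k : ℕ) : Prop :=
  ∃ (U : Type) (I : Interp U), I.Proper ∧ cost T A wT wA I ≤ (k : ℕ∞)

/-- `K ⊨ₚᵏ q`: some interpretation of cost at most `k` satisfies `q`. -/
def satP (T : Finset Axiom) (A : Finset Assertion)
    (wT : Axiom → ℕ∞) (wA : Assertion → ℕ∞) (k : ℕ) (q : BCQ) : Prop :=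
  ∃ (U : Type) (I : Interp U), I.Proper ∧ cost T A wT wA I ≤ (k : ℕ∞) ∧ satQ I q

/-- `K ⊨꜀ᵏ q`: every interpretation of cost at most `k` satisfies `q`. -/
def satC (T : Finset Axiom) (A : Finset Assertion)
    (wT : Axiom → ℕ∞) (wA : Assertion → ℕ∞) (k : ℕ) (q : BCQ) : Prop :=
  ∀ (U : Type) (I : Interp U), I.Proper → cost T A wT wA I ≤ (k : ℕ∞) → satQ I q

/-- The optimal cost of a weighted knowledge base. -/
noncomputable def optCost (T : Finset Axiom) (A : Finset Assertion)
    (wT : Axiom → ℕ∞) (wA : Assertion → ℕ∞) : ℕ∞ :=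
  sInf {c : ℕ∞ | ∃ (U : Type) (I : Interp U), I.Proper ∧ cost T A wT wA I = c}

/-- `K ⊨ₚᵒᵖᵗ q`: some interpretation of optimal cost satisfies `q`. -/
noncomputable def satPopt (T : Finset Axiom) (A : Finset Assertion)
    (wT : Axiom → ℕ∞) (wA : Assertion → ℕ∞) (q : BCQ) : Prop :=
  ∃ (U : Type) (I : Interp U), I.Proper ∧ cost T A wT wA I = optCost T A wT wA ∧ satQ I q

/-- `K ⊨꜀ᵒᵖᵗ q`: every interpretation of optimal cost satisfies `q`. -/
noncomputable def satCopt (T : Finset Axiom) (A : Finset Assertion)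
    (wT : Axiom → ℕ∞) (wA : Assertion → ℕ∞) (q : BCQ) : Prop :=
  ∀ (U : Type) (I : Interp U), I.Proper → cost T A wT wA I = optCost T A wT wA → satQ I q

/-! ### Occurrences of symbols -/

def Role.base : Role → RName
  | Role.name r => r
  | Role.inv r => r

def Concept.cnames : Concept → Finset CName
  | Concept.atom A => {A}
  | Concept.neg C => C.cnames
  | Concept.conj C D => C.cnames ∪ D.cnames
  | Concept.ex _ C => C.cnames
  | _ => ∅

def Concept.rnames : Concept → Finset RName
  | Concept.neg C => C.rnames
  | Concept.conj C D => C.rnames ∪ D.rnames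
  | Concept.ex r C => insert r.base C.rnames
  | _ => ∅

def Concept.indNames : Concept → Finset IndName
  | Concept.nom a => {a}
  | Concept.neg C => C.indNames
  | Concept.conj C D => C.indNames ∪ D.indNames
  | Concept.ex _ C => C.indNames
  | _ => ∅

def Axiom.cnames : Axiom → Finset CName
  | Axiom.ci C D => C.cnames ∪ D.cnames
  | Axiom.ri _ _ => ∅

def Axiom.rnames : Axiom → Finset RName
  | Axiom.ci C D => C.rnames ∪ D.rnames
  | Axiom.ri r s => {r.base, s.base}

def Axiom.indNames : Axiom → Finset IndName
  | Axiom.ci C D => C.indNames ∪ D.indNames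
  | Axiom.ri _ _ => ∅

def Assertion.cnames : Assertion → Finset CName
  | Assertion.ca A _ => {A}
  | Assertion.ra _ _ _ => ∅

def Assertion.rnames : Assertion → Finset RName
  | Assertion.ca _ _ => ∅
  | Assertion.ra r _ _ => {r}

def Assertion.indNames : Assertion → Finset IndName
  | Assertion.ca _ a => {a}
  | Assertion.ra _ a b => {a, b}

/-- The individual names occurring in an ABox. -/
def aboxInds (A : Finset Assertion) : Finset IndName := A.biUnion Assertion.indNames

/-- The individual names occurring in a KB. -/
def kbInds (T : Finset Axiom) (A : Finset Assertion) : Finset IndName :=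
  T.biUnion Axiom.indNames ∪ aboxInds A

def Term.indNames : Term → Finset IndName
  | Term.var _ => ∅
  | Term.ind a => {a}

def QAtom.indNames : QAtom → Finset IndName
  | QAtom.ca _ t => t.indNames
  | QAtom.ra _ t t' => t.indNames ∪ t'.indNames

def QAtom.cnames : QAtom → Finset CName
  | QAtom.ca A _ => {A}
  | QAtom.ra _ _ _ => ∅

def qInds (q : BCQ) : Finset IndName := q.biUnion QAtom.indNames

def qCnames (q : BCQ) : Finset CName := q.biUnion QAtom.cnames

/-! ### Sizes -/

def Concept.size : Concept → ℕ
  | Concept.top => 1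
  | Concept.bot => 1
  | Concept.atom _ => 1
  | Concept.nom _ => 1
  | Concept.neg C => C.size + 1
  | Concept.conj C D => C.size + D.size + 1
  | Concept.ex _ C => C.size + 2

def Axiom.size : Axiom → ℕ
  | Axiom.ci C D => C.size + D.size + 1
  | Axiom.ri _ _ => 3

def Assertion.size : Assertion → ℕ
  | Assertion.ca _ _ => 2
  | Assertion.ra _ _ _ => 3

def tboxSize (T : Finset Axiom) : ℕ := ∑ τ ∈ T, τ.size

def aboxSize (A : Finset Assertion) : ℕ := ∑ α ∈ A, α.size

/-! ### DL-Lite fragments -/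

/-- Basic concepts: concept names and unqualified existential restrictions `∃r` (with a
possibly inverse role `r`), the latter rendered as `∃r.⊤`. -/
inductive IsBasic : Concept → Prop
  | atom (A : CName) : IsBasic (Concept.atom A)
  | ex (r : Role) : IsBasic (Concept.ex r Concept.top)

/-- A `DL-Lite_core` axiom: `B ⊑ C` or `B ⊓ C ⊑ ⊥` with `B, C` basic concepts. -/
def IsCoreAxiom (τ : Axiom) : Prop :=
  (∃ B C, τ = Axiom.ci B C ∧ IsBasic B ∧ IsBasic C) ∨
  (∃ B C, τ = Axiom.ci (Concept.conj B C) Concept.bot ∧ IsBasic B ∧ IsBasic C)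

def IsDLLiteCore (T : Finset Axiom) : Prop := ∀ τ ∈ T, IsCoreAxiom τ

/-- Concepts built from basic concepts using `¬`, `⊓` (and hence also `⊔`). -/
inductive IsBoolConcept : Concept → Prop
  | basic {C} : IsBasic C → IsBoolConcept C
  | neg {C} : IsBoolConcept C → IsBoolConcept (Concept.neg C)
  | conj {C D} : IsBoolConcept C → IsBoolConcept D → IsBoolConcept (Concept.conj C D)

/-- A `DL-Lite_bool^H` axiom: a concept inclusion between Boolean combinations of basic
concepts, or a role inclusion. -/
def IsBoolHAxiom (τ : Axiom) : Prop :=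
  (∃ C D, τ = Axiom.ci C D ∧ IsBoolConcept C ∧ IsBoolConcept D) ∨ (∃ r s, τ = Axiom.ri r s)

def IsDLLiteBoolH (T : Finset Axiom) : Prop := ∀ τ ∈ T, IsBoolHAxiom τ

/-!
A homomorphic image `I.map f` of an interpretation keeps every satisfied assertion and
every query match, and its role-inclusion violations are images of those of `I`. If `f`
identifies only elements that agree on every subconcept of `T` (nominals included), then
by induction on concepts `f d` belongs to such a concept in `I.map f` iff `d` does in
`I`, so concept-inclusion violations are images as well and the cost does not grow.
Mapping each element to the set of subconcepts of `T` it belongs to gives at most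
`2 ^ (number of subconcepts)` elements, and there are at most `|T|` subconcepts.
-/

variable {U V : Type}

def Concept.subconcepts : Concept → Finset Concept
  | Concept.top => {Concept.top}
  | Concept.bot => {Concept.bot}
  | Concept.atom A => {Concept.atom A}
  | Concept.nom a => {Concept.nom a}
  | Concept.neg C => insert (Concept.neg C) C.subconcepts
  | Concept.conj C D => insert (Concept.conj C D) (C.subconcepts ∪ D.subconcepts)
  | Concept.ex r C => insert (Concept.ex r C) C.subconcepts

def Axiom.subconcepts : Axiom → Finset Concept
  | Axiom.ci C D => C.subconcepts ∪ D.subconcepts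
  | Axiom.ri _ _ => ∅

lemma Concept.mem_subconcepts_self (C : Concept) : C ∈ C.subconcepts := by
  cases C <;> simp [Concept.subconcepts]

lemma Concept.card_subconcepts_le_size (C : Concept) : C.subconcepts.card ≤ C.size := by
  induction C with
  | neg C ih =>
      have := Finset.card_insert_le (Concept.neg C) C.subconcepts
      simp only [Concept.subconcepts, Concept.size]; omega
  | conj C D ihC ihD =>
      have := Finset.card_insert_le (Concept.conj C D) (C.subconcepts ∪ D.subconcepts)
      have := Finset.card_union_le C.subconcepts D.subconcepts
      simp only [Concept.subconcepts, Concept.size]; omega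
  | ex r C ih =>
      have := Finset.card_insert_le (Concept.ex r C) C.subconcepts
      simp only [Concept.subconcepts, Concept.size]; omega
  | _ => simp [Concept.subconcepts, Concept.size]

lemma Axiom.card_subconcepts_le_size (τ : Axiom) : τ.subconcepts.card ≤ τ.size := by
  cases τ with
  | ci C D =>
      have := Finset.card_union_le C.subconcepts D.subconcepts
      have := C.card_subconcepts_le_size
      have := D.card_subconcepts_le_size
      simp only [Axiom.subconcepts, Axiom.size]; omega
  | ri r s => simp [Axiom.subconcepts]

lemma card_biUnion_subconcepts_le_tboxSize (T : Finset Axiom) :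
    (T.biUnion Axiom.subconcepts).card ≤ tboxSize T :=
  Finset.card_biUnion_le.trans (Finset.sum_le_sum fun τ _ => τ.card_subconcepts_le_size)

lemma Role.interp_subset_dom (I : Interp U) (r : Role) {p : U × U}
    (hp : p ∈ Role.interp I r) : p.1 ∈ I.dom ∧ p.2 ∈ I.dom := by
  cases r with
  | name r => exact I.rI_sub r p hp
  | inv r => exact (I.rI_sub r _ hp).symm

lemma Concept.interp_subset_dom (I : Interp U) (C : Concept) : C.interp I ⊆ I.dom := by
  induction C with
  | top => exact subset_rfl
  | bot => exact Set.empty_subset _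
  | atom A => exact I.cI_sub A
  | nom a => exact Set.inter_subset_right
  | neg C _ => exact Set.sdiff_subset
  | conj C D ihC _ => exact Set.inter_subset_left.trans ihC
  | ex r C _ => exact fun d ⟨_, hr, _⟩ => (Role.interp_subset_dom I r hr).1

def Interp.map (f : U → V) (I : Interp U) : Interp V where
  dom := f '' I.dom
  indI a := f (I.indI a)
  cI A := f '' I.cI A
  rI r := Prod.map f f '' I.rI r
  cI_sub A := Set.image_mono (I.cI_sub A)
  rI_sub r := by
    rintro _ ⟨⟨x, y⟩, hxy, rfl⟩
    exact ⟨Set.mem_image_of_mem f (I.rI_sub r _ hxy).1,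
      Set.mem_image_of_mem f (I.rI_sub r _ hxy).2⟩

namespace Interp

variable (f : U → V) (I : Interp U)

lemma Proper.map {I : Interp U} (hI : I.Proper) : (I.map f).Proper :=
  fun a => Set.mem_image_of_mem f (hI a)

lemma role_interp_map (r : Role) :
    Role.interp (I.map f) r = Prod.map f f '' Role.interp I r := by
  cases r with
  | name r => rfl
  | inv r =>
      ext ⟨x, y⟩
      constructor
      · rintro ⟨⟨x', y'⟩, h, hxy⟩
        simp only [Prod.map, Prod.mk.injEq] at hxy
        exact ⟨(y', x'), h, by simp [hxy]⟩
      · rintro ⟨⟨x', y'⟩, h, hxy⟩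
        simp only [Prod.map, Prod.mk.injEq] at hxy
        exact ⟨(y', x'), h, by simp [hxy]⟩

lemma sat_map {α : Assertion} (h : α.sat I) : α.sat (I.map f) := by
  cases α with
  | ca A a => exact Set.mem_image_of_mem f h
  | ra r a b => exact Set.mem_image_of_mem (Prod.map f f) h

lemma satQ_map {q : BCQ} (h : satQ I q) : satQ (I.map f) q := by
  obtain ⟨π, hπ, hq⟩ := h
  have eval_map : ∀ t, Term.eval (I.map f) (f ∘ π) t = f (Term.eval I π t) := by
    intro t; cases t <;> rfl
  refine ⟨f ∘ π, fun v => Set.mem_image_of_mem f (hπ v), fun a ha => ?_⟩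
  cases a with
  | ca A t =>
      show Term.eval (I.map f) (f ∘ π) t ∈ f '' I.cI A
      rw [eval_map]
      exact Set.mem_image_of_mem f (hq _ ha)
  | ra r t t' =>
      show (Term.eval (I.map f) (f ∘ π) t, Term.eval (I.map f) (f ∘ π) t') ∈
        Prod.map f f '' I.rI r
      rw [eval_map, eval_map]
      exact Set.mem_image_of_mem (Prod.map f f) (hq _ ha)

lemma vioRI_map_subset (r s : Role) :
    vioRI (I.map f) r s ⊆ Prod.map f f '' vioRI I r s := by
  rintro _ ⟨hr, hs⟩
  rw [role_interp_map] at hr hs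
  obtain ⟨p, hp, rfl⟩ := hr
  exact ⟨p, ⟨hp, fun hps => hs (Set.mem_image_of_mem _ hps)⟩, rfl⟩

def Respects (C : Concept) : Prop :=
  ∀ d e, f d = f e → d ∈ C.interp I → e ∈ C.interp I

variable {f I}

lemma concept_interp_map (hI : I.Proper) (C : Concept)
    (hf : ∀ D ∈ C.subconcepts, I.Respects f D) {d : U} (hd : d ∈ I.dom) :
    f d ∈ C.interp (I.map f) ↔ d ∈ C.interp I := by
  induction C generalizing d with
  | top => exact ⟨fun _ => hd, fun _ => Set.mem_image_of_mem f hd⟩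
  | bot => exact Iff.rfl
  | atom A =>
      refine ⟨fun ⟨e, he, hed⟩ => ?_, Set.mem_image_of_mem f⟩
      exact hf _ (Concept.mem_subconcepts_self _) e d hed he
  | nom a =>
      constructor
      · rintro ⟨had, -⟩
        exact hf _ (Concept.mem_subconcepts_self _) _ _ had.symm ⟨rfl, hI a⟩
      · rintro ⟨rfl, -⟩
        exact ⟨rfl, Set.mem_image_of_mem f hd⟩
  | neg C ih =>
      have ih := ih (fun D hD => hf D (by simp [Concept.subconcepts, hD])) hd
      simp only [Concept.interp, Set.mem_sdiff, ih]
      exact ⟨fun h => ⟨hd, h.2⟩, fun h => ⟨Set.mem_image_of_mem f hd, h.2⟩⟩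
  | conj C D ihC ihD =>
      simp only [Concept.interp, Set.mem_inter_iff,
        ihC (fun E hE => hf E (by simp [Concept.subconcepts, hE])) hd,
        ihD (fun E hE => hf E (by simp [Concept.subconcepts, hE])) hd]
  | ex r C ih =>
      have ih := fun {e} => ih (fun D hD => hf D (by simp [Concept.subconcepts, hD])) (d := e)
      constructor
      · rintro ⟨_, hr, hC⟩
        rw [role_interp_map] at hr
        obtain ⟨⟨d', e⟩, hde, hfp⟩ := hr
        simp only [Prod.map, Prod.mk.injEq] at hfp
        have he := (Role.interp_subset_dom I r hde).2
        exact hf _ (Concept.mem_subconcepts_self _) d' d hfp.1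
          ⟨e, hde, (ih he).1 (hfp.2 ▸ hC)⟩
      · rintro ⟨e, hde, heC⟩
        refine ⟨f e, ?_, (ih (Role.interp_subset_dom I r hde).2).2 heC⟩
        rw [role_interp_map]
        exact Set.mem_image_of_mem (Prod.map f f) hde

lemma vioCI_map_subset (hI : I.Proper) {C D : Concept}
    (hf : ∀ E ∈ (Axiom.ci C D).subconcepts, I.Respects f E) :
    vioCI (I.map f) C D ⊆ f '' vioCI I C D := by
  have hC := fun E hE => hf E (Finset.mem_union_left _ hE)
  have hD := fun E hE => hf E (Finset.mem_union_right _ hE)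
  rintro _ ⟨hxC, hxD⟩
  obtain ⟨d, hd, rfl⟩ := Concept.interp_subset_dom _ C hxC
  exact ⟨d, ⟨(concept_interp_map hI C hC hd).1 hxC,
    fun hdD => hxD ((concept_interp_map hI D hD hd).2 hdD)⟩, rfl⟩

lemma cost_map_le (T : Finset Axiom) (A : Finset Assertion) (wT : Axiom → ℕ∞)
    (wA : Assertion → ℕ∞) (hI : I.Proper)
    (hf : ∀ τ ∈ T, ∀ C ∈ τ.subconcepts, I.Respects f C) :
    cost T A wT wA (I.map f) ≤ cost T A wT wA I := by
  refine add_le_add (Finset.sum_le_sum fun τ hτ => mul_le_mul_right ?_ _)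
    (Finset.sum_le_sum fun α _ => ?_)
  · cases τ with
    | ci C D =>
        exact (Set.encard_mono (vioCI_map_subset hI (hf _ hτ))).trans
          (Set.encard_image_le _ _)
    | ri r s =>
        exact (Set.encard_mono (vioRI_map_subset f I r s)).trans (Set.encard_image_le _ _)
  · have := sat_map f I (α := α)
    split_ifs <;> simp_all

end Interp

open Classical in
noncomputable def conceptType (S : Finset Concept) (I : Interp U) (d : U) : Finset Concept :=
  S.filter fun C => d ∈ C.interp I

lemma respects_conceptType {S : Finset Concept} (I : Interp U) {C : Concept} (hC : C ∈ S) :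
    I.Respects (conceptType S I) C := by
  intro d e hde hd
  have : C ∈ conceptType S I d := by simp [conceptType, hC, hd]
  rw [hde] at this
  simp only [conceptType, Finset.mem_filter] at this
  exact this.2

lemma encard_dom_map_conceptType_le (S : Finset Concept) (I : Interp U) :
    (I.map (conceptType S I)).dom.encard ≤ ((2 ^ S.card : ℕ) : ℕ∞) := by
  have hsub : (I.map (conceptType S I)).dom ⊆ ↑S.powerset := by
    rintro _ ⟨d, _, rfl⟩
    simp only [conceptType, Finset.coe_powerset, Set.mem_preimage, Set.mem_powerset_iff,
      Finset.coe_subset, Finset.filter_subset]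
  calc (I.map (conceptType S I)).dom.encard ≤ (↑S.powerset : Set (Finset Concept)).encard :=
        Set.encard_mono hsub
    _ = ((2 ^ S.card : ℕ) : ℕ∞) := by
        rw [Set.encard_coe_eq_coe_finsetCard, Finset.card_powerset]

theorem statement2_general (T : Finset Axiom) (A : Finset Assertion)
    (wT : Axiom → ℕ∞) (wA : Assertion → ℕ∞)
    (k : ℕ) (q : BCQ)
    (h : ∃ (U : Type) (I : Interp U), I.Proper ∧ cost T A wT wA I ≤ (k : ℕ∞) ∧ satQ I q) :
    ∃ (U' : Type) (J : Interp U'), J.Proper ∧ cost T A wT wA J ≤ (k : ℕ∞) ∧ satQ J q ∧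
      J.dom.encard ≤ ((aboxSize A + tboxSize T + 2 ^ (2 * tboxSize T ^ 2) : ℕ) : ℕ∞) := by
  obtain ⟨U, I, hI, hcost, hq⟩ := h
  set S := T.biUnion Axiom.subconcepts
  have hf : ∀ τ ∈ T, ∀ C ∈ τ.subconcepts, I.Respects (conceptType S I) C :=
    fun τ hτ C hC => respects_conceptType I (Finset.mem_biUnion.2 ⟨τ, hτ, hC⟩)
  have hS : 2 ^ S.card ≤ aboxSize A + tboxSize T + 2 ^ (2 * tboxSize T ^ 2) := by
    have hT : S.card ≤ 2 * tboxSize T ^ 2 :=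
      calc S.card ≤ tboxSize T := card_biUnion_subconcepts_le_tboxSize T
        _ ≤ tboxSize T ^ 2 := Nat.le_self_pow two_ne_zero _
        _ ≤ 2 * tboxSize T ^ 2 := Nat.le_mul_of_pos_left _ two_pos
    exact (Nat.pow_le_pow_right two_pos hT).trans (Nat.le_add_left _ _)
  refine ⟨_, I.map (conceptType S I), hI.map _,
    (Interp.cost_map_le T A wT wA hI hf).trans hcost, Interp.satQ_map _ _ hq, ?_⟩
  exact (encard_dom_map_conceptType_le S I).trans (Nat.cast_le.2 hS)

/-- (Filtration / small model for query satisfaction.)  If some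
interpretation has cost at most `k` and satisfies the BCQ `q`, then some interpretation
has cost at most `k`, satisfies `q`, and has domain of size at most
`|A| + |T| + 2^(2|T|²)` — a bound polynomial in `|A|` and independent of `k`. -/
theorem statement2 (T : Finset Axiom) (A : Finset Assertion)
    (wT : Axiom → ℕ∞) (wA : Assertion → ℕ∞)
    (hwT : ∀ τ ∈ T, 1 ≤ wT τ) (hwA : ∀ α ∈ A, 1 ≤ wA α)
    (k : ℕ) (q : BCQ)
    (h : ∃ (U : Type) (I : Interp U), I.Proper ∧ cost T A wT wA I ≤ (k : ℕ∞) ∧ satQ I q) :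
    ∃ (U' : Type) (J : Interp U'), J.Proper ∧ cost T A wT wA J ≤ (k : ℕ∞) ∧ satQ J q ∧
      J.dom.encard ≤ ((aboxSize A + tboxSize T + 2 ^ (2 * tboxSize T ^ 2) : ℕ) : ℕ∞) :=
  statement2_general T A wT wA k q h

end DL
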